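/- arXiv:2305.17921 — 2 statements merged into one kernel-verified Lean document; each statement's English description precedes it below -/
import Mathlib

section
/- If ξ(t)ᵀ(W(t)ᵀ P W(t) + U)ξ(t) ≤ 0 for all t (for instance when W(t)ᵀ P W(t) + U is negative semidefinite for all t), then the filter error satisfies the criterion: for all T, sum_{t=0}^T ||e(t)||² ≤ μ₁ sum_{t=0}^T ||x(t)||² + μ₂ sum_{t=0}^T ||w(t)||² + e(0)ᵀ P e(0), where e(t) evolves as e(t+1) = W(t)ξ(t) with ξ(t) the stacked vector (e(t), x(t), w(t)) and U = diag(−P+I, −μ₁I, −μ₂I). -/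
/-!
The quadratic form `ξᵀ (Wᵀ P W + U) ξ` equals
`V(t+1) - V(t) + ‖e t‖² - μ₁ ‖x t‖² - μ₂ ‖w t‖²` for the Lyapunov function `V(t) = e(t)ᵀ P e(t)`,
because `W(t) ξ(t) = e(t+1)`. Its nonpositivity is thus a dissipation inequality, which
telescopes over `t ≤ T`; dropping `V(T+1) ≥ 0` gives the bound.
-/

open Matrix Finset

theorem Finset.sum_range_add_le_of_forall_sub_add_le {α : Type*} [AddCommGroup α] [PartialOrder α]
    [IsOrderedAddMonoid α] {V s r : ℕ → α} (hstep : ∀ t, V (t + 1) - V t + s t ≤ r t) (N : ℕ) :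
    ∑ t ∈ range N, s t + V N ≤ ∑ t ∈ range N, r t + V 0 := by
  have h := sum_le_sum fun t (_ : t ∈ range N) => hstep t
  rw [sum_add_distrib, sum_range_sub] at h
  calc ∑ t ∈ range N, s t + V N = V N - V 0 + ∑ t ∈ range N, s t + V 0 := by abel
    _ ≤ ∑ t ∈ range N, r t + V 0 := add_le_add_left h _

namespace Matrix

variable {R k m l : Type*} [Fintype k] [Fintype m] [Fintype l]

theorem dotProduct_transpose_mul_mul_mulVec [CommSemiring R] (W : Matrix m k R)
    (P : Matrix m m R) (v : k → R) :
    v ⬝ᵥ (Wᵀ * P * W) *ᵥ v = (W *ᵥ v) ⬝ᵥ P *ᵥ (W *ᵥ v) := by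
  rw [Matrix.mul_assoc, ← mulVec_mulVec, dotProduct_mulVec, vecMul_transpose, ← mulVec_mulVec]

theorem sumElim_dotProduct_fromBlocks_zero_mulVec_sumElim [NonUnitalNonAssocSemiring R]
    (A : Matrix m m R) (D : Matrix l l R) (a : m → R) (b : l → R) :
    Sum.elim a b ⬝ᵥ fromBlocks A 0 0 D *ᵥ Sum.elim a b = a ⬝ᵥ A *ᵥ a + b ⬝ᵥ D *ᵥ b := by
  simp [fromBlocks_mulVec, sumElim_dotProduct_sumElim]

end Matrix

theorem stmt_6_general {n p q : ℕ}
    (A : Matrix (Fin n) (Fin n) ℝ) (ΔA : ℕ → Matrix (Fin n) (Fin n) ℝ)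
    (L : Matrix (Fin n) (Fin p) ℝ) (C : Matrix (Fin p) (Fin n) ℝ)
    (D : Matrix (Fin n) (Fin q) ℝ) (E : Matrix (Fin p) (Fin q) ℝ)
    (P : Matrix (Fin n) (Fin n) ℝ) (hP : P.PosDef) (μ₁ μ₂ : ℝ)
    (e x : ℕ → Fin n → ℝ) (w : ℕ → Fin q → ℝ)
    (W : ℕ → Matrix (Fin n) ((Fin n ⊕ Fin n) ⊕ Fin q) ℝ)
    (hW : ∀ t, W t = Matrix.fromCols
      (Matrix.fromCols (A - L * C) (ΔA t)) (D - L * E))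
    (ξ : ℕ → ((Fin n ⊕ Fin n) ⊕ Fin q) → ℝ)
    (hξ : ∀ t, ξ t = Sum.elim (Sum.elim (e t) (x t)) (w t))
    (hdyn : ∀ t, e (t + 1) =
      (A - L * C).mulVec (e t) + (ΔA t).mulVec (x t) + (D - L * E).mulVec (w t))
    (U : Matrix ((Fin n ⊕ Fin n) ⊕ Fin q) ((Fin n ⊕ Fin n) ⊕ Fin q) ℝ)
    (hU : U = Matrix.fromBlocks
      (Matrix.fromBlocks (-P + 1) 0 0 (-(μ₁ • (1 : Matrix (Fin n) (Fin n) ℝ)))) 0 0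
      (-(μ₂ • (1 : Matrix (Fin q) (Fin q) ℝ))))
    (hneg : ∀ t, (ξ t) ⬝ᵥ ((W t)ᵀ * P * (W t) + U).mulVec (ξ t) ≤ 0) :
    ∀ T : ℕ,
      ∑ t ∈ Finset.range (T + 1), (e t) ⬝ᵥ (e t) ≤
        μ₁ * ∑ t ∈ Finset.range (T + 1), (x t) ⬝ᵥ (x t) +
        μ₂ * ∑ t ∈ Finset.range (T + 1), (w t) ⬝ᵥ (w t) +
        (e 0) ⬝ᵥ P.mulVec (e 0) := by
  intro T
  have dissipation : ∀ t, e (t + 1) ⬝ᵥ P *ᵥ e (t + 1) - e t ⬝ᵥ P *ᵥ e t + e t ⬝ᵥ e t ≤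
      μ₁ * (x t ⬝ᵥ x t) + μ₂ * (w t ⬝ᵥ w t) := by
    intro t
    have h := hneg t
    rw [hW, hξ, hU, add_mulVec, dotProduct_add, dotProduct_transpose_mul_mul_mulVec,
      fromCols_mulVec_sumElim, fromCols_mulVec_sumElim, ← hdyn,
      sumElim_dotProduct_fromBlocks_zero_mulVec_sumElim,
      sumElim_dotProduct_fromBlocks_zero_mulVec_sumElim] at h
    simp only [add_mulVec, neg_mulVec, smul_mulVec, one_mulVec, dotProduct_add, dotProduct_neg,
      dotProduct_smul, smul_eq_mul] at h
    linarith
  have telescoped := sum_range_add_le_of_forall_sub_add_le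
    (V := fun t => e t ⬝ᵥ P *ᵥ e t) dissipation (T + 1)
  have hV : 0 ≤ e (T + 1) ⬝ᵥ P *ᵥ e (T + 1) := hP.posSemidef.dotProduct_mulVec_nonneg _
  rw [sum_add_distrib, ← mul_sum, ← mul_sum] at telescoped
  linarith

/-- If `ξ(t)ᵀ(W(t)ᵀPW(t)+U)ξ(t) ≤ 0` for all `t`, then the filter error satisfies the
H∞-type criterion with constant `e(0)ᵀPe(0)`. -/
theorem stmt_6 {n p q : ℕ}
    (A : Matrix (Fin n) (Fin n) ℝ) (ΔA : ℕ → Matrix (Fin n) (Fin n) ℝ)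
    (L : Matrix (Fin n) (Fin p) ℝ) (C : Matrix (Fin p) (Fin n) ℝ)
    (D : Matrix (Fin n) (Fin q) ℝ) (E : Matrix (Fin p) (Fin q) ℝ)
    (P : Matrix (Fin n) (Fin n) ℝ) (hP : P.PosDef) (μ₁ μ₂ : ℝ)
    (hμ₁ : 0 < μ₁) (hμ₂ : 0 < μ₂)
    (e x : ℕ → Fin n → ℝ) (w : ℕ → Fin q → ℝ)
    (W : ℕ → Matrix (Fin n) ((Fin n ⊕ Fin n) ⊕ Fin q) ℝ)
    (hW : ∀ t, W t = Matrix.fromCols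
      (Matrix.fromCols (A - L * C) (ΔA t)) (D - L * E))
    (ξ : ℕ → ((Fin n ⊕ Fin n) ⊕ Fin q) → ℝ)
    (hξ : ∀ t, ξ t = Sum.elim (Sum.elim (e t) (x t)) (w t))
    (hdyn : ∀ t, e (t + 1) =
      (A - L * C).mulVec (e t) + (ΔA t).mulVec (x t) + (D - L * E).mulVec (w t))
    (U : Matrix ((Fin n ⊕ Fin n) ⊕ Fin q) ((Fin n ⊕ Fin n) ⊕ Fin q) ℝ)
    (hU : U = Matrix.fromBlocks
      (Matrix.fromBlocks (-P + 1) 0 0 (-(μ₁ • (1 : Matrix (Fin n) (Fin n) ℝ)))) 0 0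
      (-(μ₂ • (1 : Matrix (Fin q) (Fin q) ℝ))))
    (hneg : ∀ t, (ξ t) ⬝ᵥ ((W t)ᵀ * P * (W t) + U).mulVec (ξ t) ≤ 0) :
    ∀ T : ℕ,
      ∑ t ∈ Finset.range (T + 1), (e t) ⬝ᵥ (e t) ≤
        μ₁ * ∑ t ∈ Finset.range (T + 1), (x t) ⬝ᵥ (x t) +
        μ₂ * ∑ t ∈ Finset.range (T + 1), (w t) ⬝ᵥ (w t) +
        (e 0) ⬝ᵥ P.mulVec (e 0) :=
  stmt_6_general A ΔA L C D E P hP μ₁ μ₂ e x w W hW ξ hξ hdyn U hU hneg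
end

section
/- Main theorem (finite-dimensional LMI version): Let A, C, D, E be matrices of the queue model dimensions and let Θ ≥ 0. Suppose there exist a symmetric positive definite P, a matrix R, and scalars μ₁, μ₂, μ₃ > 0 such that the 5×5 block symmetric matrix [[−μ₃I, ΘP, 0, 0, 0], [∗, −P, PA−RC, 0, PD−RE], [∗, ∗, −P+I, 0, 0], [∗, ∗, ∗, (μ₃−μ₁)I, 0], [∗, ∗, ∗, ∗, −μ₂I]] is negative definite. Then with L = P⁻¹R, for any sequences x, w and any uncertainty ΔA(t) with sup_t ||ΔA(t)||₂ ≤ Θ (spectral norm), the error e(t+1) = (A−LC)e(t) + ΔA(t)x(t) + (D−LE)w(t) satisfies, for all T, sum_{t=0}^T ||e(t)||² ≤ μ₁ sum_{t=0}^T ||x(t)||² + μ₂ sum_{t=0}^T ||w(t)||² + e(0)ᵀPe(0). -/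
/-!
With `V e = eᵀ P e`, the LMI evaluated at the vector `(F x, e(t+1), e(t), x, w)`, where
`ΔA(t) = Θ F`, collapses (because `P e(t+1) = P(A - LC) e(t) + Θ P F x + P(D - LE) w` and
`P L = R`) to the dissipation inequality
`V e(t+1) + ‖e(t)‖² ≤ V e(t) + μ₁ ‖x‖² + μ₂ ‖w‖² + μ₃ (‖F x‖² - ‖x‖²)`,
and the last term is nonpositive since `F` is a contraction. Summing over `t` telescopes,
and `V ≥ 0` drops the final value.
-/

open Matrix

/-- `M` is negative definite: `vᵀ M v < 0` for all nonzero `v`. -/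
def NegDef {n : Type*} [Fintype n] (M : Matrix n n ℝ) : Prop :=
  ∀ v : n → ℝ, v ≠ 0 → v ⬝ᵥ M.mulVec v < 0

section QuadraticForms

variable {m n : Type*} [Fintype m] [Fintype n]

theorem NegDef.dotProduct_mulVec_nonpos {M : Matrix n n ℝ} (h : NegDef M) (v : n → ℝ) :
    v ⬝ᵥ M *ᵥ v ≤ 0 := by
  by_cases hv : v = 0
  · simp [hv]
  · exact (h v hv).le

theorem dotProduct_mulVec_comm_of_transpose_eq {P : Matrix n n ℝ} (hP : Pᵀ = P)
    (u v : n → ℝ) : u ⬝ᵥ P *ᵥ v = v ⬝ᵥ P *ᵥ u := by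
  rw [dotProduct_mulVec, ← mulVec_transpose, hP, dotProduct_comm]

theorem dotProduct_mulVec_self_le_of_posSemidef_one_sub [DecidableEq n] {F : Matrix m n ℝ}
    (hF : (1 - Fᵀ * F).PosSemidef) (v : n → ℝ) : F *ᵥ v ⬝ᵥ F *ᵥ v ≤ v ⬝ᵥ v := by
  have h := hF.dotProduct_mulVec_nonneg v
  simp only [sub_mulVec, dotProduct_sub, one_mulVec, star_trivial, ← mulVec_mulVec,
    dotProduct_mulVec v Fᵀ, vecMul_transpose] at h
  linarith

end QuadraticForms

theorem sum_range_le_of_dissipation {V s r : ℕ → ℝ} (hV : ∀ t, 0 ≤ V t)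
    (hstep : ∀ t, V (t + 1) + s t ≤ V t + r t) (T : ℕ) :
    ∑ t ∈ Finset.range (T + 1), s t ≤ ∑ t ∈ Finset.range (T + 1), r t + V 0 := by
  have htel := Finset.sum_range_sub V (T + 1)
  have hsum : ∑ t ∈ Finset.range (T + 1), (s t + (V (t + 1) - V t)) ≤
      ∑ t ∈ Finset.range (T + 1), r t :=
    Finset.sum_le_sum fun t _ => by linarith [hstep t]
  rw [Finset.sum_add_distrib, htel] at hsum
  linarith [hV (T + 1)]

section LMI

variable {n q : ℕ}

/-- The LMI matrix, with `G`, `H` in the places of `PA - RC = P(A - LC)`, `PD - RE = P(D - LE)`. -/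
def lmiMatrix (Θ μ₁ μ₂ μ₃ : ℝ) (P G : Matrix (Fin n) (Fin n) ℝ)
    (H : Matrix (Fin n) (Fin q) ℝ) :
    Matrix (Fin n ⊕ Fin n ⊕ (Fin n ⊕ Fin n) ⊕ Fin q)
      (Fin n ⊕ Fin n ⊕ (Fin n ⊕ Fin n) ⊕ Fin q) ℝ :=
  fromBlocks (-(μ₃ • (1 : Matrix (Fin n) (Fin n) ℝ))) (fromCols (Θ • P) 0)
    (fromCols (Θ • P) 0)ᵀ
    (fromBlocks (-P) (fromCols (fromCols G 0) H) (fromCols (fromCols G 0) H)ᵀ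
      (fromBlocks (fromBlocks (-P + 1) 0 0 ((μ₃ - μ₁) • (1 : Matrix (Fin n) (Fin n) ℝ)))
        0 0 (-(μ₂ • (1 : Matrix (Fin q) (Fin q) ℝ)))))

theorem lmiMatrix_quadForm (Θ μ₁ μ₂ μ₃ : ℝ) (P G : Matrix (Fin n) (Fin n) ℝ)
    (H : Matrix (Fin n) (Fin q) ℝ) (a b c₁ c₂ : Fin n → ℝ) (d : Fin q → ℝ) :
    Sum.elim a (Sum.elim b (Sum.elim (Sum.elim c₁ c₂) d)) ⬝ᵥ
        lmiMatrix Θ μ₁ μ₂ μ₃ P G H *ᵥ Sum.elim a (Sum.elim b (Sum.elim (Sum.elim c₁ c₂) d)) =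
      -(μ₃ * (a ⬝ᵥ a)) + 2 * Θ * (a ⬝ᵥ P *ᵥ b) - b ⬝ᵥ P *ᵥ b + 2 * (b ⬝ᵥ G *ᵥ c₁)
        + 2 * (b ⬝ᵥ H *ᵥ d) - c₁ ⬝ᵥ P *ᵥ c₁ + c₁ ⬝ᵥ c₁ + (μ₃ - μ₁) * (c₂ ⬝ᵥ c₂)
        - μ₂ * (d ⬝ᵥ d) := by
  simp only [lmiMatrix, fromBlocks_mulVec, Sum.elim_comp_inl, neg_mulVec, smul_mulVec, one_mulVec,
    Sum.elim_comp_inr, fromCols_mulVec, zero_mulVec, add_zero, transpose_fromCols, transpose_smul,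
    transpose_zero, fromRows_mulVec, mulVec_transpose, add_mulVec, zero_add,
    sumElim_dotProduct_sumElim, dotProduct_add, dotProduct_neg, dotProduct_smul, smul_eq_mul,
    dotProduct_mulVec, dotProduct_zero]
  rw [dotProduct_comm c₁ (b ᵥ* G), dotProduct_comm d (b ᵥ* H), dotProduct_comm b (a ᵥ* P)]
  ring

theorem lmi_dissipation {Θ μ₁ μ₂ μ₃ : ℝ} (hμ₃ : 0 < μ₃)
    {P Acl F : Matrix (Fin n) (Fin n) ℝ} {Dcl : Matrix (Fin n) (Fin q) ℝ} (hPsymm : Pᵀ = P)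
    (hLMI : NegDef (lmiMatrix Θ μ₁ μ₂ μ₃ P (P * Acl) (P * Dcl)))
    (hF : (1 - Fᵀ * F).PosSemidef) (c d : Fin n → ℝ) (w : Fin q → ℝ) :
    let b := Acl *ᵥ c + Θ • F *ᵥ d + Dcl *ᵥ w
    b ⬝ᵥ P *ᵥ b + c ⬝ᵥ c ≤ c ⬝ᵥ P *ᵥ c + μ₁ * (d ⬝ᵥ d) + μ₂ * (w ⬝ᵥ w) := by
  intro b
  set a := F *ᵥ d
  have hQ := hLMI.dotProduct_mulVec_nonpos (Sum.elim a (Sum.elim b (Sum.elim (Sum.elim c d) w)))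
  rw [lmiMatrix_quadForm] at hQ
  have hPb : b ⬝ᵥ P *ᵥ b =
      b ⬝ᵥ (P * Acl) *ᵥ c + Θ * (a ⬝ᵥ P *ᵥ b) + b ⬝ᵥ (P * Dcl) *ᵥ w := by
    rw [dotProduct_mulVec_comm_of_transpose_eq hPsymm a b]
    simp only [b, mulVec_add, mulVec_smul, mulVec_mulVec, dotProduct_add, dotProduct_smul,
      smul_eq_mul, a]
  have hcontr := mul_le_mul_of_nonneg_left
    (dotProduct_mulVec_self_le_of_posSemidef_one_sub hF d) hμ₃.le
  linarith

end LMI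

theorem stmt_18_general {n p q : ℕ}
    (A : Matrix (Fin n) (Fin n) ℝ) (C : Matrix (Fin p) (Fin n) ℝ)
    (D : Matrix (Fin n) (Fin q) ℝ) (E : Matrix (Fin p) (Fin q) ℝ)
    (Θ : ℝ)
    (P : Matrix (Fin n) (Fin n) ℝ) (hP : P.PosDef)
    (R : Matrix (Fin n) (Fin p) ℝ) (μ₁ μ₂ μ₃ : ℝ)
    (hμ₃ : 0 < μ₃)
    (hLMI : NegDef (Matrix.fromBlocks
      (-(μ₃ • (1 : Matrix (Fin n) (Fin n) ℝ)))
      (Matrix.fromCols (Θ • P) 0)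
      (Matrix.fromCols (Θ • P) 0)ᵀ
      (Matrix.fromBlocks (-P)
        (Matrix.fromCols (Matrix.fromCols (P * A - R * C) 0) (P * D - R * E))
        (Matrix.fromCols (Matrix.fromCols (P * A - R * C) 0) (P * D - R * E))ᵀ
        (Matrix.fromBlocks
          (Matrix.fromBlocks (-P + 1) 0 0 ((μ₃ - μ₁) • (1 : Matrix (Fin n) (Fin n) ℝ)))
          0 0 (-(μ₂ • (1 : Matrix (Fin q) (Fin q) ℝ)))))))
    (L : Matrix (Fin n) (Fin p) ℝ) (hL : L = P⁻¹ * R)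
    (ΔA : ℕ → Matrix (Fin n) (Fin n) ℝ)
    (hΔA : ∀ t, ∃ F : Matrix (Fin n) (Fin n) ℝ,
      ΔA t = Θ • F ∧ ((1 : Matrix (Fin n) (Fin n) ℝ) - Fᵀ * F).PosSemidef)
    (e x : ℕ → Fin n → ℝ) (w : ℕ → Fin q → ℝ)
    (hdyn : ∀ t, e (t + 1) =
      (A - L * C).mulVec (e t) + (ΔA t).mulVec (x t) + (D - L * E).mulVec (w t)) :
    ∀ T : ℕ,
      ∑ t ∈ Finset.range (T + 1), (e t) ⬝ᵥ (e t) ≤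
        μ₁ * ∑ t ∈ Finset.range (T + 1), (x t) ⬝ᵥ (x t) +
        μ₂ * ∑ t ∈ Finset.range (T + 1), (w t) ⬝ᵥ (w t) +
        (e 0) ⬝ᵥ P.mulVec (e 0) := by
  have hPL : P * L = R := by
    rw [hL, ← Matrix.mul_assoc, mul_nonsing_inv P ((isUnit_iff_isUnit_det P).1 hP.isUnit),
      Matrix.one_mul]
  have hPsymm : Pᵀ = P := by simpa using hP.isHermitian.eq
  rw [show P * A - R * C = P * (A - L * C) by rw [Matrix.mul_sub, ← Matrix.mul_assoc, hPL],
    show P * D - R * E = P * (D - L * E) by rw [Matrix.mul_sub, ← Matrix.mul_assoc, hPL]] at hLMI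
  have hstep : ∀ t, e (t + 1) ⬝ᵥ P *ᵥ e (t + 1) + e t ⬝ᵥ e t ≤
      e t ⬝ᵥ P *ᵥ e t + (μ₁ * (x t ⬝ᵥ x t) + μ₂ * (w t ⬝ᵥ w t)) := fun t => by
    obtain ⟨F, hΔ, hF⟩ := hΔA t
    rw [hdyn t, hΔ, smul_mulVec, ← add_assoc]
    exact lmi_dissipation hμ₃ hPsymm hLMI hF (e t) (x t) (w t)
  intro T
  have h := sum_range_le_of_dissipation (fun t => hP.posSemidef.dotProduct_mulVec_nonneg (e t))
    hstep T
  simpa only [Finset.sum_add_distrib, Finset.mul_sum, star_trivial] using h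

/-- Main theorem (finite-dimensional LMI version): if the 5×5 block symmetric matrix
`[[−μ₃I, ΘP, 0, 0, 0], [∗, −P, PA−RC, 0, PD−RE], [∗, ∗, −P+I, 0, 0],
[∗, ∗, ∗, (μ₃−μ₁)I, 0], [∗, ∗, ∗, ∗, −μ₂I]]` is negative definite, then with `L = P⁻¹R`
the error of the filter satisfies the H∞-type criterion for every admissible
uncertainty of spectral norm at most `Θ` (i.e. `ΔA(t) = ΘF(t)` with `F(t)ᵀF(t) ⪯ I`). -/
theorem stmt_18 {n p q : ℕ}
    (A : Matrix (Fin n) (Fin n) ℝ) (C : Matrix (Fin p) (Fin n) ℝ)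
    (D : Matrix (Fin n) (Fin q) ℝ) (E : Matrix (Fin p) (Fin q) ℝ)
    (Θ : ℝ) (hΘ : 0 ≤ Θ)
    (P : Matrix (Fin n) (Fin n) ℝ) (hP : P.PosDef)
    (R : Matrix (Fin n) (Fin p) ℝ) (μ₁ μ₂ μ₃ : ℝ)
    (hμ₁ : 0 < μ₁) (hμ₂ : 0 < μ₂) (hμ₃ : 0 < μ₃)
    (hLMI : NegDef (Matrix.fromBlocks
      (-(μ₃ • (1 : Matrix (Fin n) (Fin n) ℝ)))
      (Matrix.fromCols (Θ • P) 0)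
      (Matrix.fromCols (Θ • P) 0)ᵀ
      (Matrix.fromBlocks (-P)
        (Matrix.fromCols (Matrix.fromCols (P * A - R * C) 0) (P * D - R * E))
        (Matrix.fromCols (Matrix.fromCols (P * A - R * C) 0) (P * D - R * E))ᵀ
        (Matrix.fromBlocks
          (Matrix.fromBlocks (-P + 1) 0 0 ((μ₃ - μ₁) • (1 : Matrix (Fin n) (Fin n) ℝ)))
          0 0 (-(μ₂ • (1 : Matrix (Fin q) (Fin q) ℝ)))))))
    (L : Matrix (Fin n) (Fin p) ℝ) (hL : L = P⁻¹ * R)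
    (ΔA : ℕ → Matrix (Fin n) (Fin n) ℝ)
    (hΔA : ∀ t, ∃ F : Matrix (Fin n) (Fin n) ℝ,
      ΔA t = Θ • F ∧ ((1 : Matrix (Fin n) (Fin n) ℝ) - Fᵀ * F).PosSemidef)
    (e x : ℕ → Fin n → ℝ) (w : ℕ → Fin q → ℝ)
    (hdyn : ∀ t, e (t + 1) =
      (A - L * C).mulVec (e t) + (ΔA t).mulVec (x t) + (D - L * E).mulVec (w t)) :
    ∀ T : ℕ,
      ∑ t ∈ Finset.range (T + 1), (e t) ⬝ᵥ (e t) ≤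
        μ₁ * ∑ t ∈ Finset.range (T + 1), (x t) ⬝ᵥ (x t) +
        μ₂ * ∑ t ∈ Finset.range (T + 1), (w t) ⬝ᵥ (w t) +
        (e 0) ⬝ᵥ P.mulVec (e 0) :=
  stmt_18_general A C D E Θ P hP R μ₁ μ₂ μ₃ hμ₃ hLMI L hL ΔA hΔA e x w hdyn
end
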